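/- arXiv:2005.00944 — 3 statements merged into one kernel-verified Lean document; each statement's English description precedes it below -/
import Mathlib

section
/- Fix integers k ≥ 1, d ≥ 1 and r ≥ k, data matrices X_i ∈ ℝ^{m_i×d} and label vectors y_i ∈ ℝ^{m_i} for i = 1,…,k, and set θ_i = (X_iᵀX_i)† X_iᵀ y_i ∈ ℝ^d. Then there exists a global minimizer (B*, A_1*, …, A_k*), over B ∈ ℝ^{d×r} and A_1,…,A_k ∈ ℝ^r, of the linear MTL objective f(A_1,…,A_k;B) = Σ_{i=1}^k ‖X_i B A_i − y_i‖², such that B* A_i* = θ_i for every i = 1,…,k. -/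
/-!
The Gram matrix `M = XᵢᵀXᵢ` is symmetric, so `cfc (·⁻¹) M` solves the Penrose equations and
`G = pinv M` satisfies `M G M = M`. Then `(M G - 1) XᵢᵀXᵢ = 0`, and cancelling
the Gram factor gives `M G Xᵢᵀ = Xᵢᵀ`, i.e. `θᵢ` satisfies the normal equations and hence minimises
`‖Xᵢ w - yᵢ‖` over all `w`. Each term of the objective is thus bounded below by its value at
`w = θᵢ`, and since `r ≥ k` all these values are attained at once by the `B` with columns
`θ₁, …, θ_k, 0, …, 0` and `Aᵢ = eᵢ`.
-/

open Matrix BigOperators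

/-- Euclidean norm of a vector in `ℝ^n`. -/
noncomputable def vnorm {n : ℕ} (v : Fin n → ℝ) : ℝ := Real.sqrt (∑ i, v i ^ 2)

/- Moore–Penrose pseudoinverse of a real matrix, characterized by the four Penrose
equations (which always have a unique solution). -/
open Classical in
noncomputable def pinv {m n : ℕ} (A : Matrix (Fin m) (Fin n) ℝ) : Matrix (Fin n) (Fin m) ℝ :=
  if h : ∃ B : Matrix (Fin n) (Fin m) ℝ,
      A * B * A = A ∧ B * A * B = B ∧ (A * B)ᵀ = A * B ∧ (B * A)ᵀ = B * A
  then h.choose else 0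

def IsMoorePenroseInverse {m n R : Type*} [Fintype m] [Fintype n] [NonUnitalNonAssocSemiring R]
    [Star R] (A : Matrix m n R) (B : Matrix n m R) : Prop :=
  A * B * A = A ∧ B * A * B = B ∧ (A * B)ᴴ = A * B ∧ (B * A)ᴴ = B * A

theorem Matrix.IsHermitian.isMoorePenroseInverse_cfc_inv {n 𝕜 : Type*} [RCLike 𝕜] [Fintype n]
    [DecidableEq n] {A : Matrix n n 𝕜} (hA : A.IsHermitian) :
    IsMoorePenroseInverse A (cfc (·⁻¹ : ℝ → ℝ) A) := by
  have hmul (f g : ℝ → ℝ) : cfc f A * cfc g A = cfc (fun x => f x * g x) A :=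
    (cfc_mul f g A (finite_real_spectrum.continuousOn f) (finite_real_spectrum.continuousOn g)).symm
  have hsa (f : ℝ → ℝ) : (cfc f A)ᴴ = cfc f A := cfc_predicate (p := IsSelfAdjoint) f A
  have hinv (x : ℝ) : x⁻¹ * x * x⁻¹ = x⁻¹ := by simpa only [inv_inv] using mul_inv_mul_cancel x⁻¹
  -- `set` keeps the rewrite `A = cfc id A` away from the argument of `cfc (·⁻¹)`
  set B := cfc (·⁻¹ : ℝ → ℝ) A with hB
  unfold IsMoorePenroseInverse
  rw [← cfc_id' ℝ A hA.isSelfAdjoint, hB]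
  simp only [hmul, hsa, mul_inv_mul_cancel, hinv, and_self]

theorem isMoorePenroseInverse_pinv {m n : ℕ} {A : Matrix (Fin m) (Fin n) ℝ}
    (h : ∃ B, IsMoorePenroseInverse A B) : IsMoorePenroseInverse A (pinv A) := by
  simp only [IsMoorePenroseInverse, conjTranspose_eq_transpose_of_trivial] at h ⊢
  rw [pinv, dif_pos h]
  exact h.choose_spec

theorem Matrix.conjTranspose_mul_self_mul_mul_conjTranspose {m n R : Type*} [Fintype m] [Fintype n]
    [DecidableEq n] [PartialOrder R] [Ring R] [StarRing R] [StarOrderedRing R] [NoZeroDivisors R]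
    {X : Matrix m n R} {G : Matrix n n R}
    (h : Xᴴ * X * G * (Xᴴ * X) = Xᴴ * X) : Xᴴ * X * G * Xᴴ = Xᴴ := by
  have := (mul_conjTranspose_mul_self_eq_zero X (Xᴴ * X * G - 1)).mp
    (by rw [Matrix.sub_mul, h, Matrix.one_mul, sub_self])
  rwa [Matrix.sub_mul, Matrix.one_mul, sub_eq_zero] at this

theorem transpose_mul_self_mulVec_pinv {m d : ℕ} (X : Matrix (Fin m) (Fin d) ℝ) (y : Fin m → ℝ) :
    (Xᵀ * X) *ᵥ ((pinv (Xᵀ * X) * Xᵀ) *ᵥ y) = Xᵀ *ᵥ y := by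
  have hG : IsHermitian (Xᵀ * X) := by
    simpa only [conjTranspose_eq_transpose_of_trivial] using isHermitian_conjTranspose_mul_self X
  have hpinv := (isMoorePenroseInverse_pinv ⟨_, hG.isMoorePenroseInverse_cfc_inv⟩).1
  rw [← conjTranspose_eq_transpose_of_trivial] at hpinv ⊢
  rw [mulVec_mulVec, ← Matrix.mul_assoc, conjTranspose_mul_self_mul_mul_conjTranspose hpinv]

theorem dotProduct_mulVec_sub_le_of_normal_eq {m n : Type*} [Fintype m] [Fintype n]
    {X : Matrix m n ℝ} {y : m → ℝ} {θ : n → ℝ} (hθ : (Xᵀ * X) *ᵥ θ = Xᵀ *ᵥ y) (w : n → ℝ) :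
    (X *ᵥ θ - y) ⬝ᵥ (X *ᵥ θ - y) ≤ (X *ᵥ w - y) ⬝ᵥ (X *ᵥ w - y) := by
  set e := X *ᵥ θ - y
  set u := X *ᵥ (w - θ)
  have hw : X *ᵥ w - y = e + u := by simp only [e, u, mulVec_sub]; abel
  have horth : e ⬝ᵥ u = 0 := by
    rw [dotProduct_mulVec, ← mulVec_transpose, mulVec_sub, mulVec_mulVec, hθ, sub_self,
      zero_dotProduct]
  have hu : 0 ≤ u ⬝ᵥ u := dotProduct_self_star_nonneg u
  rw [hw, add_dotProduct, dotProduct_add, dotProduct_add, dotProduct_comm u e, horth]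
  linarith

theorem vnorm_mulVec_sub_le_of_normal_eq {m n : ℕ} {X : Matrix (Fin m) (Fin n) ℝ}
    {y : Fin m → ℝ} {θ : Fin n → ℝ} (hθ : (Xᵀ * X) *ᵥ θ = Xᵀ *ᵥ y) (w : Fin n → ℝ) :
    vnorm (X *ᵥ θ - y) ≤ vnorm (X *ᵥ w - y) := by
  have hsum (v : Fin m → ℝ) : ∑ i, v i ^ 2 = v ⬝ᵥ v := by simp only [dotProduct, sq]
  simp only [vnorm, hsum]
  exact Real.sqrt_le_sqrt (dotProduct_mulVec_sub_le_of_normal_eq hθ w)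

theorem exists_mulVec_eq_of_embedding {α ι κ R : Type*} [Fintype κ] [DecidableEq κ] [Semiring R]
    (e : ι ↪ κ) (θ : ι → α → R) : ∃ (B : Matrix α κ R) (A : ι → κ → R), ∀ i, B *ᵥ A i = θ i :=
  ⟨(of (Function.extend e θ 0))ᵀ, fun i => Pi.single (e i) 1, fun i => by
    rw [mulVec_single_one, col_transpose]
    exact e.injective.extend_apply θ 0 i⟩

theorem mtl_capacity_no_transfer_general
    (k d r : ℕ) (hr : k ≤ r)
    (m : Fin k → ℕ)
    (X : ∀ i : Fin k, Matrix (Fin (m i)) (Fin d) ℝ)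
    (y : ∀ i : Fin k, Fin (m i) → ℝ)
    (θ : Fin k → Fin d → ℝ)
    (hθ : ∀ i, θ i = (pinv ((X i)ᵀ * X i) * (X i)ᵀ).mulVec (y i)) :
    ∃ (B : Matrix (Fin d) (Fin r) ℝ) (A : Fin k → Fin r → ℝ),
      (∀ (B' : Matrix (Fin d) (Fin r) ℝ) (A' : Fin k → Fin r → ℝ),
        (∑ i, vnorm (fun j => (X i).mulVec (B.mulVec (A i)) j - y i j) ^ 2) ≤
        (∑ i, vnorm (fun j => (X i).mulVec (B'.mulVec (A' i)) j - y i j) ^ 2)) ∧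
      (∀ i, B.mulVec (A i) = θ i) := by
  obtain ⟨B, A, hBA⟩ := exists_mulVec_eq_of_embedding (Fin.castLEEmb hr) θ
  refine ⟨B, A, fun B' A' => Finset.sum_le_sum fun i _ => ?_, hBA⟩
  rw [hBA i, hθ i]
  exact pow_le_pow_left₀ (Real.sqrt_nonneg _)
    (vnorm_mulVec_sub_le_of_normal_eq (transpose_mul_self_mulVec_pinv (X i) (y i)) _) 2

/-- if the shared module capacity `r` is at least the number of tasks `k`,
then there is a global minimizer `(B, A₁, …, A_k)` of the linear MTL objective with
`B Aᵢ = θᵢ = (XᵢᵀXᵢ)† Xᵢᵀ yᵢ` for every task `i`. -/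
theorem mtl_capacity_no_transfer
    (k d r : ℕ) (hk : 1 ≤ k) (hd : 1 ≤ d) (hr : k ≤ r)
    (m : Fin k → ℕ)
    (X : ∀ i : Fin k, Matrix (Fin (m i)) (Fin d) ℝ)
    (y : ∀ i : Fin k, Fin (m i) → ℝ)
    (θ : Fin k → Fin d → ℝ)
    (hθ : ∀ i, θ i = (pinv ((X i)ᵀ * X i) * (X i)ᵀ).mulVec (y i)) :
    ∃ (B : Matrix (Fin d) (Fin r) ℝ) (A : Fin k → Fin r → ℝ),
      (∀ (B' : Matrix (Fin d) (Fin r) ℝ) (A' : Fin k → Fin r → ℝ),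
        (∑ i, vnorm (fun j => (X i).mulVec (B.mulVec (A i)) j - y i j) ^ 2) ≤
        (∑ i, vnorm (fun j => (X i).mulVec (B'.mulVec (A' i)) j - y i j) ^ 2)) ∧
      (∀ i, B.mulVec (A i) = θ i) :=
  mtl_capacity_no_transfer_general k d r hr m X y θ hθ
end

section
/- Let a, b ∈ ℝ^d be unit vectors and let X ∈ ℝ^{m×d} have full column rank with condition number κ(X). Then |sin(Xa, Xb)| ≥ (1/κ(X)²) · |sin(a, b)|. -/
open Matrix BigOperators

/-- Euclidean inner product of two vectors in `ℝ^n`. -/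
noncomputable def vdot {n : ℕ} (u v : Fin n → ℝ) : ℝ := ∑ i, u i * v i

/-- Cosine of the angle between two vectors. -/
noncomputable def vcos {n : ℕ} (u v : Fin n → ℝ) : ℝ := vdot u v / (vnorm u * vnorm v)

/-- (Nonnegative) sine of the angle between two vectors. -/
noncomputable def vsin {n : ℕ} (u v : Fin n → ℝ) : ℝ := Real.sqrt (1 - vcos u v ^ 2)

/-- Largest singular value of a matrix: `sup` of `‖Xx‖` over unit vectors `x`. -/
noncomputable def lamMax {m n : ℕ} (X : Matrix (Fin m) (Fin n) ℝ) : ℝ :=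
  sSup {t | ∃ x : Fin n → ℝ, vnorm x = 1 ∧ t = vnorm (X.mulVec x)}

/-- Smallest singular value of a matrix: `inf` of `‖Xx‖` over unit vectors `x`. -/
noncomputable def lamMin {m n : ℕ} (X : Matrix (Fin m) (Fin n) ℝ) : ℝ :=
  sInf {t | ∃ x : Fin n → ℝ, vnorm x = 1 ∧ t = vnorm (X.mulVec x)}

/-- Condition number `κ(X) = λ_max(X) / λ_min(X)`. -/
noncomputable def condNum {m n : ℕ} (X : Matrix (Fin m) (Fin n) ℝ) : ℝ :=
  lamMax X / lamMin X

/- ======== auxiliary lemmas ======== -/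

lemma vnorm_nonneg' {n : ℕ} (v : Fin n → ℝ) : 0 ≤ vnorm v := Real.sqrt_nonneg _

lemma vnorm_sq' {n : ℕ} (v : Fin n → ℝ) : vnorm v ^ 2 = ∑ i, v i ^ 2 :=
  Real.sq_sqrt (Finset.sum_nonneg fun i _ => sq_nonneg _)

lemma vnorm_smul' {n : ℕ} (c : ℝ) (v : Fin n → ℝ) :
    vnorm (fun i => c * v i) = |c| * vnorm v := by
  unfold vnorm
  rw [← Real.sqrt_sq_eq_abs, ← Real.sqrt_mul (sq_nonneg c), Finset.mul_sum]
  congr 1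
  exact Finset.sum_congr rfl fun i _ => by ring

lemma cauchy' {n : ℕ} (u v : Fin n → ℝ) : vdot u v ^ 2 ≤ vnorm u ^ 2 * vnorm v ^ 2 := by
  rw [vnorm_sq', vnorm_sq']
  exact Finset.sum_mul_sq_le_sq_mul_sq _ _ _

lemma norm_mulVec_le' {m n : ℕ} (X : Matrix (Fin m) (Fin n) ℝ) (x : Fin n → ℝ)
    (hx : vnorm x = 1) :
    vnorm (X.mulVec x) ≤ Real.sqrt (∑ i, ∑ j, X i j ^ 2) := by
  apply Real.sqrt_le_sqrt
  calc ∑ i, X.mulVec x i ^ 2 ≤ ∑ i, (∑ j, X i j ^ 2) * (∑ j, x j ^ 2) := by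
        refine Finset.sum_le_sum fun i _ => ?_
        exact Finset.sum_mul_sq_le_sq_mul_sq Finset.univ (fun j => X i j) x
    _ = ∑ i, ∑ j, X i j ^ 2 := by
        have h1 : ∑ j, x j ^ 2 = 1 := by
          rw [← vnorm_sq', hx]; norm_num
        simp [h1]

lemma le_lamMax' {m n : ℕ} (X : Matrix (Fin m) (Fin n) ℝ) (x : Fin n → ℝ)
    (hx : vnorm x = 1) : vnorm (X.mulVec x) ≤ lamMax X := by
  refine le_csSup ⟨Real.sqrt (∑ i, ∑ j, X i j ^ 2), ?_⟩ ⟨x, hx, rfl⟩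
  rintro t ⟨y, hy, rfl⟩
  exact norm_mulVec_le' X y hy

lemma lamMin_le' {m n : ℕ} (X : Matrix (Fin m) (Fin n) ℝ) (x : Fin n → ℝ)
    (hx : vnorm x = 1) : lamMin X ≤ vnorm (X.mulVec x) :=
  csInf_le ⟨0, by rintro t ⟨y, hy, rfl⟩; exact vnorm_nonneg' _⟩ ⟨x, hx, rfl⟩

lemma lamMin_nonneg' {m n : ℕ} (X : Matrix (Fin m) (Fin n) ℝ) : 0 ≤ lamMin X :=
  Real.sInf_nonneg (by rintro t ⟨y, hy, rfl⟩; exact vnorm_nonneg' _)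

lemma lamMin_mul_le' {m n : ℕ} (X : Matrix (Fin m) (Fin n) ℝ) (w : Fin n → ℝ) :
    lamMin X * vnorm w ≤ vnorm (X.mulVec w) := by
  rcases eq_or_lt_of_le (vnorm_nonneg' w) with h | h
  · rw [← h, mul_zero]; exact vnorm_nonneg' _
  · set c := (vnorm w)⁻¹ with hc
    have hc0 : 0 < c := inv_pos.2 h
    have hx : vnorm (fun i => c * w i) = 1 := by
      rw [vnorm_smul', abs_of_pos hc0, hc, inv_mul_cancel₀ (ne_of_gt h)]
    have hle := lamMin_le' X _ hx
    have hmv : X.mulVec (fun i => c * w i) = fun i => c * X.mulVec w i := by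
      ext i
      simp only [Matrix.mulVec, dotProduct, Finset.mul_sum]
      exact Finset.sum_congr rfl fun j _ => by ring
    rw [hmv, vnorm_smul', abs_of_pos hc0] at hle
    calc lamMin X * vnorm w ≤ (c * vnorm (X.mulVec w)) * vnorm w :=
          mul_le_mul_of_nonneg_right hle (le_of_lt h)
      _ = vnorm (X.mulVec w) := by
          rw [mul_comm c, mul_assoc, hc, inv_mul_cancel₀ (ne_of_gt h), mul_one]

lemma vnorm_sub_smul_sq' {n : ℕ} (p q : Fin n → ℝ) (s : ℝ) :
    vnorm (fun i => p i - s * q i) ^ 2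
      = vnorm p ^ 2 - 2 * s * vdot q p + s ^ 2 * vnorm q ^ 2 := by
  simp only [vnorm_sq', vdot]
  rw [Finset.mul_sum, Finset.mul_sum, ← Finset.sum_sub_distrib, ← Finset.sum_add_distrib]
  exact Finset.sum_congr rfl fun i _ => by ring

/-- for unit vectors `a, b` and a full-column-rank matrix `X` with
condition number `κ(X)`, one has `|sin(Xa, Xb)| ≥ (1/κ(X)²) |sin(a, b)|`. -/
theorem sin_angle_lower_bound
    (m d : ℕ) (a b : Fin d → ℝ) (ha : vnorm a = 1) (hb : vnorm b = 1)
    (X : Matrix (Fin m) (Fin d) ℝ) (hX : X.rank = d) :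
    (1 / condNum X ^ 2) * |vsin a b| ≤ |vsin (X.mulVec a) (X.mulVec b)| := by
  set L := lamMin X with hLdef
  set M := lamMax X with hMdef
  rcases eq_or_lt_of_le (lamMin_nonneg' X) with hL | hL
  · -- degenerate case: λ_min = 0, so 1/κ² = 1/(M/0)² = 0 in Lean's conventions
    rw [condNum, ← hL, div_zero]
    norm_num
  · -- main case
    set u := X.mulVec a with hudef
    set v := X.mulVec b with hvdef
    have hu : L ≤ vnorm u := lamMin_le' X a ha
    have hv : L ≤ vnorm v := lamMin_le' X b hb
    have hMu : vnorm u ≤ M := le_lamMax' X a ha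
    have hMv : vnorm v ≤ M := le_lamMax' X b hb
    have hu0 : 0 < vnorm u := lt_of_lt_of_le hL hu
    have hv0 : 0 < vnorm v := lt_of_lt_of_le hL hv
    have hM0 : 0 < M := lt_of_lt_of_le hu0 hMu
    set c := vdot a b with hcdef
    have hc2 : c ^ 2 ≤ 1 := by
      have h := cauchy' a b
      rw [ha, hb] at h
      simpa using h
    set t := vdot u v / vnorm u ^ 2 with htdef
    -- the vector w = b - t a
    have h1 : L * vnorm (fun i => b i - t * a i) ≤ vnorm (X.mulVec (fun i => b i - t * a i)) :=
      lamMin_mul_le' X _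
    have h1' : (L * vnorm (fun i => b i - t * a i)) ^ 2
        ≤ vnorm (X.mulVec (fun i => b i - t * a i)) ^ 2 :=
      pow_le_pow_left₀ (mul_nonneg (le_of_lt hL) (vnorm_nonneg' _)) h1 2
    have hXw : X.mulVec (fun i => b i - t * a i) = fun i => v i - t * u i := by
      ext i
      simp only [hvdef, hudef, Matrix.mulVec, dotProduct, Finset.mul_sum,
        ← Finset.sum_sub_distrib]
      exact Finset.sum_congr rfl fun j _ => by ring
    have hw2 : vnorm (fun i => b i - t * a i) ^ 2 = 1 - 2 * t * c + t ^ 2 := by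
      rw [vnorm_sub_smul_sq' b a t, hb, ha, ← hcdef]
      ring
    have hw3 : 1 - c ^ 2 ≤ vnorm (fun i => b i - t * a i) ^ 2 := by
      rw [hw2]; nlinarith [sq_nonneg (t - c)]
    have hXw2 : vnorm (X.mulVec (fun i => b i - t * a i)) ^ 2
        = vnorm v ^ 2 - vdot u v ^ 2 / vnorm u ^ 2 := by
      rw [hXw, vnorm_sub_smul_sq' v u t, htdef]
      field_simp
      ring
    -- L² (1 - c²) ≤ ‖v‖² - ⟨u,v⟩²/‖u‖²
    have hkey : L ^ 2 * (1 - c ^ 2) ≤ vnorm v ^ 2 - vdot u v ^ 2 / vnorm u ^ 2 := by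
      rw [← hXw2]
      calc L ^ 2 * (1 - c ^ 2) ≤ L ^ 2 * vnorm (fun i => b i - t * a i) ^ 2 :=
            mul_le_mul_of_nonneg_left hw3 (sq_nonneg L)
        _ = (L * vnorm (fun i => b i - t * a i)) ^ 2 := by ring
        _ ≤ _ := h1'
    have hu2ne : vnorm u ^ 2 ≠ 0 := by positivity
    have hkey2 : L ^ 2 * (1 - c ^ 2) * vnorm u ^ 2
        ≤ vnorm u ^ 2 * vnorm v ^ 2 - vdot u v ^ 2 := by
      have h := mul_le_mul_of_nonneg_right hkey (sq_nonneg (vnorm u))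
      have he : (vnorm v ^ 2 - vdot u v ^ 2 / vnorm u ^ 2) * vnorm u ^ 2
          = vnorm u ^ 2 * vnorm v ^ 2 - vdot u v ^ 2 := by
        field_simp
      linarith [he ▸ h]
    have hL2u : L ^ 2 ≤ vnorm u ^ 2 := pow_le_pow_left₀ (le_of_lt hL) hu 2
    have hs : 0 ≤ 1 - c ^ 2 := by linarith
    have hnum : L ^ 2 * L ^ 2 * (1 - c ^ 2)
        ≤ vnorm u ^ 2 * vnorm v ^ 2 - vdot u v ^ 2 := by
      nlinarith [mul_le_mul_of_nonneg_left hL2u (mul_nonneg (sq_nonneg L) hs)]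
    -- now the final computation
    have habs1 : |vsin a b| = Real.sqrt (1 - c ^ 2) := by
      rw [vsin, abs_of_nonneg (Real.sqrt_nonneg _), vcos, ha, hb, ← hcdef]
      norm_num
    have habs2 : |vsin u v| = Real.sqrt (1 - vcos u v ^ 2) :=
      abs_of_nonneg (Real.sqrt_nonneg _)
    rw [habs1, habs2, condNum, ← hMdef, ← hLdef, one_div, div_pow, inv_div]
    have hq0 : (0:ℝ) ≤ L ^ 2 / M ^ 2 := by positivity
    have hlhs : L ^ 2 / M ^ 2 * Real.sqrt (1 - c ^ 2)
        = Real.sqrt ((L ^ 2 / M ^ 2) ^ 2 * (1 - c ^ 2)) := by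
      rw [Real.sqrt_mul (sq_nonneg _), Real.sqrt_sq hq0]
    rw [hlhs]
    apply Real.sqrt_le_sqrt
    have hcos : vcos u v ^ 2 = vdot u v ^ 2 / (vnorm u ^ 2 * vnorm v ^ 2) := by
      rw [vcos, div_pow, mul_pow]
    rw [hcos]
    have hD : (0:ℝ) < vnorm u ^ 2 * vnorm v ^ 2 := by positivity
    have h5 : 1 - vdot u v ^ 2 / (vnorm u ^ 2 * vnorm v ^ 2)
        = (vnorm u ^ 2 * vnorm v ^ 2 - vdot u v ^ 2) / (vnorm u ^ 2 * vnorm v ^ 2) := by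
      field_simp
    rw [h5, le_div_iff₀ hD]
    have hu2M : vnorm u ^ 2 ≤ M ^ 2 := pow_le_pow_left₀ (le_of_lt hu0) hMu 2
    have hv2M : vnorm v ^ 2 ≤ M ^ 2 := pow_le_pow_left₀ (le_of_lt hv0) hMv 2
    have huv : vnorm u ^ 2 * vnorm v ^ 2 ≤ M ^ 2 * M ^ 2 :=
      mul_le_mul hu2M hv2M (sq_nonneg _) (sq_nonneg _)
    have hq : (L ^ 2 / M ^ 2) * M ^ 2 = L ^ 2 := div_mul_cancel₀ _ (by positivity)
    have h6 : (L ^ 2 / M ^ 2) ^ 2 * (1 - c ^ 2) * (vnorm u ^ 2 * vnorm v ^ 2)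
        ≤ (L ^ 2 / M ^ 2) ^ 2 * (1 - c ^ 2) * (M ^ 2 * M ^ 2) :=
      mul_le_mul_of_nonneg_left huv (mul_nonneg (sq_nonneg _) hs)
    have h7 : (L ^ 2 / M ^ 2) ^ 2 * (1 - c ^ 2) * (M ^ 2 * M ^ 2)
        = ((L ^ 2 / M ^ 2) * M ^ 2) * ((L ^ 2 / M ^ 2) * M ^ 2) * (1 - c ^ 2) := by ring
    rw [hq] at h7
    linarith [h7 ▸ h6]
end

section
/- Let k ≥ 1, r ≤ d, and suppose the data matrices X_i ∈ ℝ^{m_i×d} of k tasks all satisfy X_iᵀX_i = Σ for a fixed positive definite Σ ∈ ℝ^{d×d} with eigendecomposition Σ = V D Vᵀ (V ∈ ℝ^{d×d} orthogonal, D diagonal with positive entries). Let y_i ∈ ℝ^{m_i}, let α_1,…,α_k > 0, set U_i = X_i V D^{-1/2} (which has orthonormal columns) and M = Σ_{i=1}^k α_i U_iᵀ y_i y_iᵀ U_i ∈ ℝ^{d×d}. Let C* ∈ ℝ^{d×r} have orthonormal columns maximizing tr(CᵀMC) over all C ∈ ℝ^{d×r} with orthonormal columns, and set B* = V D^{-1/2}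 C*. Then there exist A_1*,…,A_k* ∈ ℝ^r such that (B*, A_1*, …, A_k*) is a global minimizer, over B ∈ ℝ^{d×r} and A_i ∈ ℝ^r, of the reweighted MTL objective Σ_{i=1}^k α_i ‖X_i B A_i − y_i‖². -/
/-!
Whitening turns every design `Xᵢ` into `Uᵢ = Xᵢ V D^{-1/2}` with orthonormal columns, and any
`B'` gives `Xᵢ B' = Uᵢ G` with `G = D^{1/2} Vᵀ B'`. Gram–Schmidt (this is where `r ≤ d` enters)
puts the column space of `G` inside that of some `C'` with `r` orthonormal columns, so the
`i`-th residual is at least `‖yᵢ‖² - ‖(Uᵢ C')ᵀ yᵢ‖²`. Weighted and summed, this lower bound is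
`∑ αᵢ ‖yᵢ‖² - tr (C'ᵀ M C')`, which the maximality of `C` bounds below by
`∑ αᵢ ‖yᵢ‖² - tr (Cᵀ M C)`: exactly the value attained at `B` with heads `Aᵢ = (Uᵢ C)ᵀ yᵢ`.
-/

open Matrix BigOperators

open Submodule Set InnerProductSpace

theorem exists_orthonormal_range_subset_span {𝕜 E : Type*} [RCLike 𝕜] [NormedAddCommGroup E]
    [InnerProductSpace 𝕜 E] [FiniteDimensional 𝕜 E] {r : ℕ} (hr : r ≤ Module.finrank 𝕜 E)
    (g : Fin r → E) : ∃ e : Fin r → E, Orthonormal 𝕜 e ∧ range g ⊆ span 𝕜 (range e) := by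
  set f : Fin (Module.finrank 𝕜 E) → E := fun j => if h : (j : ℕ) < r then g ⟨j, h⟩ else 0
  set b := gramSchmidtOrthonormalBasis (𝕜 := 𝕜) (Fintype.card_fin _).symm f
  refine ⟨b ∘ Fin.castLE hr, b.orthonormal.comp _ (Fin.castLE_injective hr), ?_⟩
  rintro _ ⟨i, rfl⟩
  have hgf : g i = f (Fin.castLE hr i) := by simp [f]
  rw [hgf, ← b.sum_repr (f _)]
  refine sum_mem fun j _ => ?_
  by_cases hj : (j : ℕ) < r
  · exact smul_mem _ _ (subset_span ⟨⟨j, hj⟩, rfl⟩)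
  · have hij : Fin.castLE hr i < j := Fin.lt_def.2 (by rw [Fin.val_castLE]; omega)
    rw [gramSchmidtOrthonormalBasis_inv_triangular' _ _ hij, zero_smul]
    exact zero_mem _

theorem exists_transpose_mul_self_eq_one_and_mul_transpose_mul_eq {d r : ℕ} (hrd : r ≤ d)
    (G : Matrix (Fin d) (Fin r) ℝ) :
    ∃ C : Matrix (Fin d) (Fin r) ℝ, Cᵀ * C = 1 ∧ C * (Cᵀ * G) = G := by
  have hinner (x y : EuclideanSpace ℝ (Fin d)) : inner ℝ x y = ∑ p, x p * y p := by
    simp [EuclideanSpace.inner_eq_star_dotProduct, dotProduct, mul_comm]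
  obtain ⟨e, he, hGe⟩ := exists_orthonormal_range_subset_span (𝕜 := ℝ) (by simpa using hrd)
    fun q => WithLp.toLp 2 (Gᵀ q)
  refine ⟨of fun p q => e q p, ?_, ?_⟩
  · ext i j
    simpa [mul_apply, one_apply, ← hinner] using orthonormal_iff_ite.1 he i j
  · ext p q
    obtain ⟨c, hc⟩ := (mem_span_range_iff_exists_fun ℝ).1 (hGe ⟨q, rfl⟩)
    have hcoef (j : Fin r) : ∑ p', e j p' * G p' q = c j := by
      rw [← he.inner_right_fintype c j, hc, hinner]; rfl
    have hGpq : ∑ j, c j * e j p = G p q := by simpa using congrArg (fun v => v p) hc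
    simp only [mul_apply, transpose_apply, of_apply, hcoef, ← hGpq]
    exact Finset.sum_congr rfl fun j _ => mul_comm _ _

theorem vnorm_sub_sq {n : ℕ} (u v : Fin n → ℝ) :
    vnorm (fun j => u j - v j) ^ 2 = (u - v) ⬝ᵥ (u - v) := by
  rw [vnorm, Real.sq_sqrt (Finset.sum_nonneg fun i _ => sq_nonneg _)]
  simp only [dotProduct, sq, Pi.sub_apply]

theorem transpose_mul_self_mul_eq_one {l m n R : Type*} [Fintype l] [Fintype m] [DecidableEq m]
    [DecidableEq n] [CommSemiring R] {A : Matrix l m R} {B : Matrix m n R} (hA : Aᵀ * A = 1)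
    (hB : Bᵀ * B = 1) : (A * B)ᵀ * (A * B) = 1 := by
  rw [transpose_mul, Matrix.mul_assoc, ← Matrix.mul_assoc Aᵀ, hA, Matrix.one_mul, hB]

section OrthonormalColumns

variable {m n R : Type*} [Fintype m] [Fintype n] [DecidableEq n]

variable [CommRing R] {Q : Matrix m n R}

theorem mulVec_dotProduct_mulVec_of_transpose_mul_self (hQ : Qᵀ * Q = 1) (u v : n → R) :
    Q *ᵥ u ⬝ᵥ Q *ᵥ v = u ⬝ᵥ v := by
  rw [dotProduct_mulVec, ← mulVec_transpose, mulVec_mulVec, hQ, one_mulVec]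

theorem mulVec_sub_dotProduct_self (hQ : Qᵀ * Q = 1) (u : n → R) (y : m → R) :
    (Q *ᵥ u - y) ⬝ᵥ (Q *ᵥ u - y) =
      (u - Qᵀ *ᵥ y) ⬝ᵥ (u - Qᵀ *ᵥ y) + y ⬝ᵥ y - Qᵀ *ᵥ y ⬝ᵥ Qᵀ *ᵥ y := by
  have hcross : Q *ᵥ u ⬝ᵥ y = u ⬝ᵥ Qᵀ *ᵥ y := by
    rw [dotProduct_comm, dotProduct_mulVec, ← mulVec_transpose, dotProduct_comm]
  simp only [sub_dotProduct, dotProduct_sub, mulVec_dotProduct_mulVec_of_transpose_mul_self hQ,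
    dotProduct_comm y, hcross, dotProduct_comm (Qᵀ *ᵥ y) u]
  ring

theorem mulVec_transpose_mulVec_sub_dotProduct_self (hQ : Qᵀ * Q = 1) (y : m → R) :
    (Q *ᵥ Qᵀ *ᵥ y - y) ⬝ᵥ (Q *ᵥ Qᵀ *ᵥ y - y) = y ⬝ᵥ y - Qᵀ *ᵥ y ⬝ᵥ Qᵀ *ᵥ y := by
  rw [mulVec_sub_dotProduct_self hQ, sub_self, zero_dotProduct, zero_add]

theorem dotProduct_self_sub_le_mulVec_sub_dotProduct_self {Q : Matrix m n ℝ} (hQ : Qᵀ * Q = 1)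
    (u : n → ℝ) (y : m → ℝ) :
    y ⬝ᵥ y - Qᵀ *ᵥ y ⬝ᵥ Qᵀ *ᵥ y ≤ (Q *ᵥ u - y) ⬝ᵥ (Q *ᵥ u - y) := by
  have hsq := dotProduct_star_self_nonneg (u - Qᵀ *ᵥ y)
  rw [star_trivial] at hsq
  rw [mulVec_sub_dotProduct_self hQ]
  linarith

end OrthonormalColumns

theorem trace_transpose_mul_vecMulVec_mul {m n R : Type*} [Fintype m] [Fintype n]
    [CommSemiring R] (Q : Matrix m n R) (y : m → R) :
    (Qᵀ * vecMulVec y y * Q).trace = Qᵀ *ᵥ y ⬝ᵥ Qᵀ *ᵥ y := by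
  rw [mul_vecMulVec, vecMulVec_mul, trace_vecMulVec, ← mulVec_transpose]

theorem trace_transpose_mul_sum_smul_vecMulVec_mul {ι n p R : Type*} [Fintype ι] [Fintype n]
    [Fintype p] [CommSemiring R] {m : ι → Type*} [∀ i, Fintype (m i)] (α : ι → R)
    (U : ∀ i, Matrix (m i) n R) (y : ∀ i, m i → R) (C : Matrix n p R) :
    (Cᵀ * (∑ i, α i • ((U i)ᵀ * vecMulVec (y i) (y i) * U i)) * C).trace =
      ∑ i, α i * ((U i * C)ᵀ *ᵥ y i ⬝ᵥ (U i * C)ᵀ *ᵥ y i) := by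
  rw [Matrix.mul_sum, Matrix.sum_mul, trace_sum]
  refine Finset.sum_congr rfl fun i _ => ?_
  rw [Matrix.mul_smul, Matrix.smul_mul, trace_smul, smul_eq_mul,
    ← trace_transpose_mul_vecMulVec_mul, transpose_mul]
  simp only [Matrix.mul_assoc]

section Whitening

variable {m n : Type*} [Fintype m] [Fintype n] [DecidableEq n] {V : Matrix n n ℝ} {D : n → ℝ}

theorem transpose_mul_self_mul_diagonal_inv_sqrt {X : Matrix m n ℝ} (hV : Vᵀ * V = 1)
    (hD : ∀ j, 0 < D j) (hX : Xᵀ * X = V * diagonal D * Vᵀ) :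
    (X * V * diagonal fun j => (√(D j))⁻¹)ᵀ * (X * V * diagonal fun j => (√(D j))⁻¹) = 1 := by
  set S := diagonal fun j => (√(D j))⁻¹
  have hVXXV : Vᵀ * (Xᵀ * X) * V = diagonal D := by
    rw [hX, ← Matrix.mul_assoc, ← Matrix.mul_assoc, hV, Matrix.one_mul, Matrix.mul_assoc, hV,
      Matrix.mul_one]
  calc (X * V * S)ᵀ * (X * V * S) = S * (Vᵀ * (Xᵀ * X) * V) * S := by
        simp only [S, transpose_mul, diagonal_transpose, Matrix.mul_assoc]
    _ = 1 := by
      rw [hVXXV, diagonal_mul_diagonal, diagonal_mul_diagonal, ← diagonal_one]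
      congr 1
      funext j
      have hsqrt : √(D j) * √(D j) = D j := Real.mul_self_sqrt (hD j).le
      have hpos : 0 < √(D j) := Real.sqrt_pos.2 (hD j)
      field_simp
      linarith

theorem mul_diagonal_inv_sqrt_mul_diagonal_sqrt_mul_transpose (hV : Vᵀ * V = 1)
    (hD : ∀ j, 0 < D j) :
    V * diagonal (fun j => (√(D j))⁻¹) * (diagonal (fun j => √(D j)) * Vᵀ) = 1 := by
  rw [Matrix.mul_assoc, ← Matrix.mul_assoc (diagonal _), diagonal_mul_diagonal]
  have hinv : (fun j => (√(D j))⁻¹ * √(D j)) = fun _ => 1 :=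
    funext fun j => inv_mul_cancel₀ (Real.sqrt_pos.2 (hD j)).ne'
  rw [hinv, diagonal_one, Matrix.one_mul, mul_eq_one_comm.1 hV]

end Whitening

theorem equal_covariance_mtl_optimum_general
    (k d r : ℕ) (hrd : r ≤ d)
    (m : Fin k → ℕ)
    (X : ∀ i : Fin k, Matrix (Fin (m i)) (Fin d) ℝ)
    (S : Matrix (Fin d) (Fin d) ℝ) (hS : ∀ i, (X i)ᵀ * X i = S)
    (V : Matrix (Fin d) (Fin d) ℝ) (hV : Vᵀ * V = 1)
    (Ddiag : Fin d → ℝ) (hD : ∀ j, 0 < Ddiag j)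
    (hSdec : S = V * Matrix.diagonal Ddiag * Vᵀ)
    (y : ∀ i : Fin k, Fin (m i) → ℝ) (α : Fin k → ℝ) (hα : ∀ i, 0 < α i)
    (U : ∀ i : Fin k, Matrix (Fin (m i)) (Fin d) ℝ)
    (hU : ∀ i, U i = X i * V * Matrix.diagonal (fun j => (Real.sqrt (Ddiag j))⁻¹))
    (M : Matrix (Fin d) (Fin d) ℝ)
    (hM : M = ∑ i, α i • ((U i)ᵀ * Matrix.vecMulVec (y i) (y i) * U i))
    (C : Matrix (Fin d) (Fin r) ℝ) (hC : Cᵀ * C = 1)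
    (hCmax : ∀ C' : Matrix (Fin d) (Fin r) ℝ, C'ᵀ * C' = 1 →
      (C'ᵀ * M * C').trace ≤ (Cᵀ * M * C).trace)
    (B : Matrix (Fin d) (Fin r) ℝ)
    (hB : B = V * Matrix.diagonal (fun j => (Real.sqrt (Ddiag j))⁻¹) * C) :
    ∃ A : Fin k → Fin r → ℝ,
      ∀ (B' : Matrix (Fin d) (Fin r) ℝ) (A' : Fin k → Fin r → ℝ),
        (∑ i, α i * vnorm (fun j => (X i).mulVec (B.mulVec (A i)) j - y i j) ^ 2) ≤
        (∑ i, α i * vnorm (fun j => (X i).mulVec (B'.mulVec (A' i)) j - y i j) ^ 2) := by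
  set G := diagonal (fun j => √(Ddiag j)) * Vᵀ
  have hUU (i : Fin k) : (U i)ᵀ * U i = 1 :=
    hU i ▸ transpose_mul_self_mul_diagonal_inv_sqrt hV hD (hSdec ▸ hS i)
  have hXU (i : Fin k) : X i = U i * G := by
    rw [hU i, Matrix.mul_assoc (X i) V, Matrix.mul_assoc (X i),
      mul_diagonal_inv_sqrt_mul_diagonal_sqrt_mul_transpose hV hD, Matrix.mul_one]
  refine ⟨fun i => (U i * C)ᵀ *ᵥ y i, fun B' A' => ?_⟩
  obtain ⟨C', hC', hproj⟩ := exists_transpose_mul_self_eq_one_and_mul_transpose_mul_eq hrd (G * B')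
  have hXB (i : Fin k) (a : Fin r → ℝ) : X i *ᵥ B *ᵥ a = (U i * C) *ᵥ a := by
    rw [mulVec_mulVec, hB, hU i]; simp only [Matrix.mul_assoc]
  have hXB' (i : Fin k) (a : Fin r → ℝ) :
      X i *ᵥ B' *ᵥ a = (U i * C') *ᵥ (C'ᵀ * (G * B')) *ᵥ a := by
    rw [mulVec_mulVec, mulVec_mulVec, Matrix.mul_assoc, hproj, hXU i, Matrix.mul_assoc]
  simp only [vnorm_sub_sq, hXB, hXB']
  calc _ = ∑ i, α i * (y i ⬝ᵥ y i) - (Cᵀ * M * C).trace := by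
        simp only [hM, trace_transpose_mul_sum_smul_vecMulVec_mul, ← Finset.sum_sub_distrib,
          ← mul_sub, mulVec_transpose_mulVec_sub_dotProduct_self (transpose_mul_self_mul_eq_one
            (hUU _) hC)]
    _ ≤ ∑ i, α i * (y i ⬝ᵥ y i) - (C'ᵀ * M * C').trace := by linarith [hCmax C' hC']
    _ ≤ _ := by
        rw [hM, trace_transpose_mul_sum_smul_vecMulVec_mul, ← Finset.sum_sub_distrib]
        refine Finset.sum_le_sum fun i _ => mul_sub (α i) _ _ ▸ mul_le_mul_of_nonneg_left
          (dotProduct_self_sub_le_mulVec_sub_dotProduct_self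
            (transpose_mul_self_mul_eq_one (hUU i) hC') _ _) (hα i).le

/-- Proposition: equal task covariances: if all tasks share the same
covariance `XᵢᵀXᵢ = Σ = V D Vᵀ`, `Uᵢ = Xᵢ V D^{-1/2}`, `M = Σᵢ αᵢ Uᵢᵀ yᵢ yᵢᵀ Uᵢ`, and
`C⋆` maximizes `tr(Cᵀ M C)` over matrices with `r` orthonormal columns, then
`B⋆ = V D^{-1/2} C⋆` (with suitable heads `Aᵢ⋆`) is a global minimizer of the
reweighted MTL objective. -/
theorem equal_covariance_mtl_optimum
    (k d r : ℕ) (hk : 1 ≤ k) (hrd : r ≤ d)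
    (m : Fin k → ℕ)
    (X : ∀ i : Fin k, Matrix (Fin (m i)) (Fin d) ℝ)
    (S : Matrix (Fin d) (Fin d) ℝ) (hS : ∀ i, (X i)ᵀ * X i = S) (hSpd : S.PosDef)
    (V : Matrix (Fin d) (Fin d) ℝ) (hV : Vᵀ * V = 1)
    (Ddiag : Fin d → ℝ) (hD : ∀ j, 0 < Ddiag j)
    (hSdec : S = V * Matrix.diagonal Ddiag * Vᵀ)
    (y : ∀ i : Fin k, Fin (m i) → ℝ) (α : Fin k → ℝ) (hα : ∀ i, 0 < α i)
    (U : ∀ i : Fin k, Matrix (Fin (m i)) (Fin d) ℝ)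
    (hU : ∀ i, U i = X i * V * Matrix.diagonal (fun j => (Real.sqrt (Ddiag j))⁻¹))
    (M : Matrix (Fin d) (Fin d) ℝ)
    (hM : M = ∑ i, α i • ((U i)ᵀ * Matrix.vecMulVec (y i) (y i) * U i))
    (C : Matrix (Fin d) (Fin r) ℝ) (hC : Cᵀ * C = 1)
    (hCmax : ∀ C' : Matrix (Fin d) (Fin r) ℝ, C'ᵀ * C' = 1 →
      (C'ᵀ * M * C').trace ≤ (Cᵀ * M * C).trace)
    (B : Matrix (Fin d) (Fin r) ℝ)
    (hB : B = V * Matrix.diagonal (fun j => (Real.sqrt (Ddiag j))⁻¹) * C) :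
    ∃ A : Fin k → Fin r → ℝ,
      ∀ (B' : Matrix (Fin d) (Fin r) ℝ) (A' : Fin k → Fin r → ℝ),
        (∑ i, α i * vnorm (fun j => (X i).mulVec (B.mulVec (A i)) j - y i j) ^ 2) ≤
        (∑ i, α i * vnorm (fun j => (X i).mulVec (B'.mulVec (A' i)) j - y i j) ^ 2) :=
  equal_covariance_mtl_optimum_general k d r hrd m X S hS V hV Ddiag hD hSdec y α hα U hU M hM C hC
    hCmax B hB
end
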